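/- Let $E$ be a row-finite directed graph with no sinks and let $R$ be a unital ring. In $S = L_R(E)$ with its canonical grading, suppose a vertex $v$ can be written $v = \sum_{i=1}^m \alpha_i\alpha_i^*$ where each $\alpha_i$ is a finite path with $s(\alpha_i)=v$ such that there exists a finite path $\beta_i$ with $r(\beta_i)=r(\alpha_i)$ and $|\beta_i| = |\alpha_i|+1$. Then $v \in S_{-1}S_1$. -/

import Mathlib

/-- A directed graph: vertices, edges, and source/range maps. -/
structure DirGraph where
  V : Type
  Ed : Type
  s : Ed → V
  r : Ed → V

namespace DirGraph

variable (E : DirGraph)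

/-- A (finite) path is a list of composable edges. -/
def IsPath (l : List E.Ed) : Prop := l.Chain' (fun e f => E.r e = E.s f)

/-- The list of edges `l` starts at the vertex `v` (vacuously true for the empty list). -/
def StartsAt (v : E.V) (l : List E.Ed) : Prop := ∀ e ∈ l.head?, E.s e = v

/-- The end vertex of a path `l` which starts at `v`. -/
def endV (v : E.V) (l : List E.Ed) : E.V := l.getLast?.elim v E.r

/-- A nonempty list of edges `l` ends at the vertex `w`. -/
def EndsAt (l : List E.Ed) (w : E.V) : Prop := ∃ e, l.getLast? = some e ∧ E.r e = w

/-- An infinite path is a sequence of composable edges. -/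
def IsInfPath (p : ℕ → E.Ed) : Prop := ∀ n, E.r (p n) = E.s (p (n + 1))

/-- `E` is row-finite: every vertex emits only finitely many edges. -/
def RowFinite : Prop := ∀ v : E.V, {e : E.Ed | E.s e = v}.Finite

/-- `E` has no sinks: every vertex emits at least one edge. -/
def NoSinks : Prop := ∀ v : E.V, ∃ e : E.Ed, E.s e = v

/-- Condition (Y): for every `k ≥ 1` and every infinite path `p`, some (nonempty) initial
subpath of `p` (of length `n`, ending at the vertex `E.s (p n)`) admits a finite path `β`
with the same range and with length exceeding `n` by exactly `k`. -/
def CondY : Prop := ∀ k : ℕ, 1 ≤ k → ∀ p : ℕ → E.Ed, E.IsInfPath p →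
  ∃ n : ℕ, 1 ≤ n ∧ ∃ β : List E.Ed, E.IsPath β ∧ β.length = n + k ∧ E.EndsAt β (E.s (p n))

/-- Condition (Y1): Condition (Y) restricted to `k = 1`. -/
def CondY1 : Prop := ∀ p : ℕ → E.Ed, E.IsInfPath p →
  ∃ n : ℕ, 1 ≤ n ∧ ∃ β : List E.Ed, E.IsPath β ∧ β.length = n + 1 ∧ E.EndsAt β (E.s (p n))

/-- `r(α)` is a turning node for the path `α` (starting at `v`): there is a path of length
`|α| + 1` with the same range as `α`. -/
def Turning (v : E.V) (α : List E.Ed) : Prop :=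
  ∃ β : List E.Ed, E.IsPath β ∧ β.length = α.length + 1 ∧ E.EndsAt β (E.endV v α)

/-- The set `Xₙ(v)`: paths of length `n` starting at `v`, all of whose nonempty initial
subpaths end at non-turning nodes. -/
def Xset (n : ℕ) (v : E.V) : Set (List E.Ed) :=
  {l | E.IsPath l ∧ E.StartsAt v l ∧ l.length = n ∧
    ∀ i : ℕ, 1 ≤ i → i ≤ n → ¬ E.Turning v (l.take i)}

end DirGraph
namespace LPA

/-- Generators of the Leavitt path algebra: vertices, real edges, and ghost edges. -/
inductive LGen (E : DirGraph) : Type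
  | vert : E.V → LGen E
  | edge : E.Ed → LGen E
  | ghost : E.Ed → LGen E

/-- Degree of a generator: `0` for vertices, `1` for real edges, `-1` for ghost edges. -/
def gdeg {E : DirGraph} : LGen E → ℤ
  | .vert _ => 0
  | .edge _ => 1
  | .ghost _ => -1

/-- Degree of a word in the generators. -/
def wdeg {E : DirGraph} (w : FreeSemigroup (LGen E)) : ℤ :=
  Multiplicative.toAdd
    (FreeSemigroup.lift (fun x : LGen E => Multiplicative.ofAdd (gdeg x)) w)

variable (R : Type) [Ring R] (E : DirGraph)

/-- The free (non-unital) `R`-ring on the generators, with `R` commuting with the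
generators: the semigroup algebra of the free semigroup on the generators. -/
abbrev FreeLPA : Type := MonoidAlgebra R (FreeSemigroup (LGen E))

/-- A generator, as an element of the free ring. -/
noncomputable def fgen (x : LGen E) : FreeLPA R E :=
  MonoidAlgebra.single (FreeSemigroup.of x) 1

open scoped Classical in
/-- The defining relations (1)–(4) of the Leavitt path algebra. -/
inductive LRel : FreeLPA R E → FreeLPA R E → Prop
  | vert_mul (u v : E.V) :
      LRel (fgen R E (.vert u) * fgen R E (.vert v))
        (if u = v then fgen R E (.vert v) else 0)
  | src_edge (f : E.Ed) :
      LRel (fgen R E (.vert (E.s f)) * fgen R E (.edge f)) (fgen R E (.edge f))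
  | edge_rng (f : E.Ed) :
      LRel (fgen R E (.edge f) * fgen R E (.vert (E.r f))) (fgen R E (.edge f))
  | rng_ghost (f : E.Ed) :
      LRel (fgen R E (.vert (E.r f)) * fgen R E (.ghost f)) (fgen R E (.ghost f))
  | ghost_src (f : E.Ed) :
      LRel (fgen R E (.ghost f) * fgen R E (.vert (E.s f))) (fgen R E (.ghost f))
  | ghost_edge (f f' : E.Ed) :
      LRel (fgen R E (.ghost f) * fgen R E (.edge f'))
        (if f = f' then fgen R E (.vert (E.r f)) else 0)
  | ck (v : E.V) (A : Finset E.Ed) (hA : A.Nonempty) (hAv : ∀ f, f ∈ A ↔ E.s f = v) :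
      LRel (∑ f ∈ A, fgen R E (.edge f) * fgen R E (.ghost f)) (fgen R E (.vert v))

/-- The ring congruence generated by the Leavitt path algebra relations. -/
noncomputable def lcon : RingCon (FreeLPA R E) := ringConGen (LRel R E)

/-- The Leavitt path algebra `L_R(E)`, as a non-unital ring. -/
noncomputable def Leavitt : Type := (lcon R E).Quotient

noncomputable instance : NonUnitalRing (Leavitt R E) :=
  inferInstanceAs (NonUnitalRing (lcon R E).Quotient)

/-- The quotient map from the free ring onto the Leavitt path algebra. -/
noncomputable def lmk (x : FreeLPA R E) : Leavitt R E := (x : (lcon R E).Quotient)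

/-- A generator, as an element of the Leavitt path algebra. -/
noncomputable def gen (x : LGen E) : Leavitt R E := lmk R E (fgen R E x)

/-- The homogeneous component of degree `n` of the canonical `ℤ`-gradation of `L_R(E)`:
the additive subgroup generated by (the images of) all monomials `c·w` with `w` a word
of degree `n` in the generators. -/
noncomputable def LS (n : ℤ) : AddSubgroup (Leavitt R E) :=
  AddSubgroup.closure
    {x | ∃ (w : FreeSemigroup (LGen E)) (c : R),
      wdeg w = n ∧ x = lmk R E (MonoidAlgebra.single w c)}

/-- The product of two additive subgroups of a (possibly non-unital) ring: the additive
subgroup generated by products. -/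
def subMul {S : Type} [NonUnitalRing S] (A B : AddSubgroup S) : AddSubgroup S :=
  AddSubgroup.closure {x | ∃ a ∈ A, ∃ b ∈ B, x = a * b}

/-- `L_R(E)` is strongly `ℤ`-graded: `S_n S_m = S_{n+m}` for all `n, m ∈ ℤ`. -/
noncomputable def StronglyGraded : Prop :=
  ∀ n m : ℤ, subMul (LS R E n) (LS R E m) = LS R E (n + m)

/-- The element `v·f₁⋯fₙ` of `L_R(E)` associated to a path `α = f₁⋯fₙ` starting at `v`. -/
noncomputable def mkPath (v : E.V) (α : List E.Ed) : Leavitt R E :=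
  (α.map fun e => gen R E (.edge e)).foldl (· * ·) (gen R E (.vert v))

/-- The element `fₙ*⋯f₁*·v` of `L_R(E)` associated to the ghost path `α* = fₙ*⋯f₁*`
of a path `α = f₁⋯fₙ` starting at `v`. -/
noncomputable def mkPathStar (v : E.V) (α : List E.Ed) : Leavitt R E :=
  ((α.map fun e => gen R E (.ghost e)).reverse).foldr (· * ·) (gen R E (.vert v))

end LPA


section Aux

namespace LPA

variable (R : Type) [Ring R] (E : DirGraph)

lemma lmk_mul (x y : FreeLPA R E) : lmk R E (x * y) = lmk R E x * lmk R E y := rfl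

lemma lrel_eq {x y : FreeLPA R E} (h : LRel R E x y) : lmk R E x = lmk R E y :=
  (RingCon.eq (lcon R E)).mpr (RingConGen.Rel.of x y h)

lemma gen_mul (x y : LGen E) :
    gen R E x * gen R E y = lmk R E (fgen R E x * fgen R E y) := rfl

lemma vert_sq (u : E.V) :
    gen R E (.vert u) * gen R E (.vert u) = gen R E (.vert u) := by
  have := lrel_eq R E (LRel.vert_mul u u)
  rw [if_pos rfl] at this; exact this

lemma vert_mul_edge (f : E.Ed) :
    gen R E (.vert (E.s f)) * gen R E (.edge f) = gen R E (.edge f) :=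
  lrel_eq R E (LRel.src_edge f)

lemma edge_mul_vert (f : E.Ed) :
    gen R E (.edge f) * gen R E (.vert (E.r f)) = gen R E (.edge f) :=
  lrel_eq R E (LRel.edge_rng f)

lemma vert_mul_ghost (f : E.Ed) :
    gen R E (.vert (E.r f)) * gen R E (.ghost f) = gen R E (.ghost f) :=
  lrel_eq R E (LRel.rng_ghost f)

lemma ghost_mul_vert (f : E.Ed) :
    gen R E (.ghost f) * gen R E (.vert (E.s f)) = gen R E (.ghost f) :=
  lrel_eq R E (LRel.ghost_src f)

lemma ghost_mul_edge (f : E.Ed) :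
    gen R E (.ghost f) * gen R E (.edge f) = gen R E (.vert (E.r f)) := by
  have := lrel_eq R E (LRel.ghost_edge f f)
  rw [if_pos rfl] at this; exact this

lemma foldl_mul {S : Type} [NonUnitalRing S] (l : List S) (x y : S) :
    l.foldl (· * ·) (x * y) = x * l.foldl (· * ·) y := by
  induction l generalizing y with
  | nil => rfl
  | cons a t ih =>
      simp only [List.foldl_cons, mul_assoc]
      exact ih (y * a)

lemma foldr_mul {S : Type} [NonUnitalRing S] (l : List S) (x y : S) :
    l.foldr (· * ·) (y * x) = l.foldr (· * ·) y * x := by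
  induction l with
  | nil => rfl
  | cons a t ih => simp only [List.foldr_cons, ih, mul_assoc]

lemma mkPath_nil (v : E.V) : mkPath R E v [] = gen R E (.vert v) := rfl

lemma mkPathStar_nil (v : E.V) : mkPathStar R E v [] = gen R E (.vert v) := rfl

lemma mkPath_cons (v : E.V) (f : E.Ed) (t : List E.Ed) (h : E.s f = v) :
    mkPath R E v (f :: t) = gen R E (.edge f) * mkPath R E (E.r f) t := by
  unfold mkPath
  simp only [List.map_cons, List.foldl_cons]
  have h1 : gen R E (.vert v) * gen R E (.edge f) = gen R E (.edge f) := by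
    rw [← h]; exact vert_mul_edge R E f
  rw [h1, ← edge_mul_vert R E f, foldl_mul, edge_mul_vert]

lemma mkPathStar_cons (v : E.V) (f : E.Ed) (t : List E.Ed) (h : E.s f = v) :
    mkPathStar R E v (f :: t) = mkPathStar R E (E.r f) t * gen R E (.ghost f) := by
  unfold mkPathStar
  simp only [List.map_cons, List.reverse_cons, List.foldr_append, List.foldr_cons,
    List.foldr_nil]
  have h1 : gen R E (.ghost f) * gen R E (.vert v) = gen R E (.ghost f) := by
    rw [← h]; exact ghost_mul_vert R E f
  rw [h1, ← vert_mul_ghost R E f, foldr_mul, vert_mul_ghost]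

lemma vert_mul_mkPath (w : E.V) (t : List E.Ed) :
    gen R E (.vert w) * mkPath R E w t = mkPath R E w t := by
  unfold mkPath
  rw [← foldl_mul, vert_sq]

lemma isPath_cons {f : E.Ed} {t : List E.Ed} (h : E.IsPath (f :: t)) :
    E.IsPath t ∧ E.StartsAt (E.r f) t := by
  rw [DirGraph.IsPath] at h; change List.IsChain _ _ at h; rw [List.isChain_cons] at h
  exact ⟨h.2, fun e he => (h.1 e he).symm⟩

lemma endV_cons (v : E.V) (f : E.Ed) (t : List E.Ed) :
    E.endV v (f :: t) = E.endV (E.r f) t := by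
  cases t with
  | nil => rfl
  | cons a t' => simp [DirGraph.endV, List.getLast?]

lemma star_mul_self (v : E.V) (l : List E.Ed) (hp : E.IsPath l) (hs : E.StartsAt v l) :
    mkPathStar R E v l * mkPath R E v l = gen R E (.vert (E.endV v l)) := by
  induction l generalizing v with
  | nil => exact vert_sq R E v
  | cons f t ih =>
      have hf : E.s f = v := hs f rfl
      obtain ⟨hpt, hst⟩ := isPath_cons E hp
      rw [mkPath_cons R E v f t hf, mkPathStar_cons R E v f t hf, endV_cons,
        mul_assoc, ← mul_assoc (gen R E (.ghost f)), ghost_mul_edge,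
        vert_mul_mkPath, ih (E.r f) hpt hst]

lemma vert_mul_mkPathStar (v : E.V) (l : List E.Ed) (hp : E.IsPath l)
    (hs : E.StartsAt v l) :
    gen R E (.vert (E.endV v l)) * mkPathStar R E v l = mkPathStar R E v l := by
  induction l generalizing v with
  | nil => exact vert_sq R E v
  | cons f t ih =>
      have hf : E.s f = v := hs f rfl
      obtain ⟨hpt, hst⟩ := isPath_cons E hp
      rw [mkPathStar_cons R E v f t hf, endV_cons, ← mul_assoc,
        ih (E.r f) hpt hst]

/-- `x` is (the image of) a single monomial of degree `n`. -/
def Mono (n : ℤ) (x : Leavitt R E) : Prop :=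
  ∃ (w : FreeSemigroup (LGen E)) (c : R),
    wdeg w = n ∧ x = lmk R E (MonoidAlgebra.single w c)

lemma wdeg_mul (w w' : FreeSemigroup (LGen E)) :
    wdeg (w * w') = wdeg w + wdeg w' := by
  simp [wdeg, map_mul]

lemma mono_mul {n m : ℤ} {x y : Leavitt R E} (hx : Mono R E n x) (hy : Mono R E m y) :
    Mono R E (n + m) (x * y) := by
  obtain ⟨w, c, hw, rfl⟩ := hx
  obtain ⟨w', c', hw', rfl⟩ := hy
  refine ⟨w * w', c * c', by rw [wdeg_mul, hw, hw'], ?_⟩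
  rw [← lmk_mul, MonoidAlgebra.single_mul_single]

lemma mono_gen (x : LGen E) : Mono R E (gdeg x) (gen R E x) :=
  ⟨FreeSemigroup.of x, 1, by simp [wdeg], rfl⟩

lemma mono_foldl (l : List E.Ed) (n : ℤ) (x : Leavitt R E) (h : Mono R E n x) :
    Mono R E (n + l.length)
      ((l.map (fun e => gen R E (.edge e))).foldl (· * ·) x) := by
  induction l generalizing n x with
  | nil => simpa using h
  | cons a t ih =>
      have := ih (n + 1) (x * gen R E (.edge a)) (mono_mul R E h (mono_gen R E (.edge a)))
      simp only [List.map_cons, List.foldl_cons, List.length_cons]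
      have heq : n + ((t.length + 1 : ℕ) : ℤ) = n + 1 + t.length := by push_cast; ring
      rw [heq]
      exact this

lemma mono_foldr (l : List E.Ed) (n : ℤ) (x : Leavitt R E) (h : Mono R E n x) :
    Mono R E (n - l.length)
      (((l.map (fun e => gen R E (.ghost e))).reverse).foldr (· * ·) x) := by
  induction l generalizing n x with
  | nil => simpa using h
  | cons a t ih =>
      have := ih ((-1) + n) (gen R E (.ghost a) * x)
        (mono_mul R E (mono_gen R E (.ghost a)) h)
      simp only [List.map_cons, List.reverse_cons, List.foldr_append, List.foldr_cons,
        List.foldr_nil, List.length_cons]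
      have heq : n - ((t.length + 1 : ℕ) : ℤ) = (-1) + n - t.length := by push_cast; ring
      rw [heq]
      exact this

lemma mono_mkPath (v : E.V) (l : List E.Ed) :
    Mono R E l.length (mkPath R E v l) := by
  have := mono_foldl R E l 0 (gen R E (.vert v)) (mono_gen R E (.vert v))
  rw [zero_add] at this
  unfold mkPath
  exact this

lemma mono_mkPathStar (v : E.V) (l : List E.Ed) :
    Mono R E (-(l.length : ℤ)) (mkPathStar R E v l) := by
  have := mono_foldr R E l 0 (gen R E (.vert v)) (mono_gen R E (.vert v))
  rw [zero_sub] at this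
  unfold mkPathStar
  exact this

lemma mono_mem_LS {n : ℤ} {x : Leavitt R E} (h : Mono R E n x) : x ∈ LS R E n := by
  obtain ⟨w, c, hw, rfl⟩ := h
  exact AddSubgroup.subset_closure ⟨w, c, hw, rfl⟩

lemma mul_mem_subMul {S : Type} [NonUnitalRing S] {A B : AddSubgroup S} {a b : S}
    (ha : a ∈ A) (hb : b ∈ B) : a * b ∈ subMul A B :=
  AddSubgroup.subset_closure ⟨a, ha, b, hb, rfl⟩

end LPA

end Aux

/-- If a vertex `v` of a row-finite graph with no sinks can be written in `L_R(E)` as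
`v = ∑ᵢ αᵢαᵢ*` where each path `αᵢ` starts at `v` and admits a path `βᵢ` with
`r(βᵢ) = r(αᵢ)` and `|βᵢ| = |αᵢ| + 1`, then `v ∈ S₋₁S₁`. -/
theorem vert_mem_subMul_negOne_one (R : Type) [Ring R] (E : DirGraph)
    (hrf : E.RowFinite) (hns : E.NoSinks) (v : E.V)
    (m : ℕ) (α : Fin m → List E.Ed)
    (hpath : ∀ i, E.IsPath (α i) ∧ E.StartsAt v (α i))
    (hβ : ∀ i, ∃ β : List E.Ed, E.IsPath β ∧ β.length = (α i).length + 1 ∧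
      E.EndsAt β (E.endV v (α i)))
    (hv : LPA.gen R E (.vert v) =
      ∑ i, LPA.mkPath R E v (α i) * LPA.mkPathStar R E v (α i)) :
    LPA.gen R E (.vert v) ∈ LPA.subMul (LPA.LS R E (-1)) (LPA.LS R E 1) := by
  rw [hv]
  apply AddSubgroup.sum_mem
  intro i _
  obtain ⟨β, hβp, hβl, e, hlast, hre⟩ := hβ i
  have hne : β ≠ [] := by
    intro h; rw [h] at hβl; simp at hβl
  set u := E.s (β.head hne) with hu
  have hstart : E.StartsAt u β := by
    intro f hf
    rw [List.head?_eq_head hne] at hf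
    simp only [Option.mem_def, Option.some.injEq] at hf
    rw [← hf, hu]
  have hendβ : E.endV u β = E.endV v (α i) := by
    rw [DirGraph.endV, hlast]
    simpa using hre
  obtain ⟨hαp, hαs⟩ := hpath i
  have key : LPA.mkPath R E v (α i) * LPA.mkPathStar R E v (α i)
      = (LPA.mkPath R E v (α i) * LPA.mkPathStar R E u β)
        * (LPA.mkPath R E u β * LPA.mkPathStar R E v (α i)) := by
    rw [mul_assoc, ← mul_assoc (LPA.mkPathStar R E u β),
      LPA.star_mul_self R E u β hβp hstart, hendβ,
      LPA.vert_mul_mkPathStar R E v (α i) hαp hαs]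
  rw [key]
  have h1 : LPA.Mono R E (-1) (LPA.mkPath R E v (α i) * LPA.mkPathStar R E u β) := by
    have := LPA.mono_mul R E (LPA.mono_mkPath R E v (α i)) (LPA.mono_mkPathStar R E u β)
    have hdeg : ((α i).length : ℤ) + -(β.length : ℤ) = -1 := by
      rw [hβl]; push_cast; ring
    rw [← hdeg]
    exact this
  have h2 : LPA.Mono R E 1 (LPA.mkPath R E u β * LPA.mkPathStar R E v (α i)) := by
    have := LPA.mono_mul R E (LPA.mono_mkPath R E u β) (LPA.mono_mkPathStar R E v (α i))
    have hdeg : ((β.length : ℤ)) + -((α i).length : ℤ) = 1 := by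
      rw [hβl]; push_cast; ring
    rw [← hdeg]
    exact this
  exact LPA.mul_mem_subMul (LPA.mono_mem_LS R E h1) (LPA.mono_mem_LS R E h2)
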